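/- Let p > 1 and suppose f, g ∈ L²(ℝ) satisfy ‖f‖₂ = ‖g‖₂ = 1 and that Δ_p(f) and Δ_p(g) are finite. For real α with |α| < 1 define h_α = (f + αg)/‖f + αg‖₂. If |α| < √38/2 − 3 and Δ_p(h_α)² ≤ 2 Δ_p(f)², then |μ_p(h_α) − μ_p(f)| ≤ 2 (4 Δ_p(f)²)^{1/p}. -/

import Mathlib

open MeasureTheory Filter

/-- `pVar p h a = ∫ |t - a|^p * |h t|^2 dt`. -/
noncomputable def pVar (p : ℝ) (h : ℝ → ℂ) (a : ℝ) : ℝ :=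
  ∫ t : ℝ, |t - a| ^ p * ‖h t‖ ^ 2

/-- The `p`-mean `μ_p(h)`: the (under the standing hypotheses unique) global minimizer
of `a ↦ pVar p h a`. -/
noncomputable def pMean (p : ℝ) (h : ℝ → ℂ) : ℝ :=
  sInf {a : ℝ | ∀ b : ℝ, pVar p h a ≤ pVar p h b}

/-- The `p`-dispersion `Δ_p(h) = (∫ |t - μ_p(h)|^p |h t|²)^{1/2}`. -/
noncomputable def pDisp (p : ℝ) (h : ℝ → ℂ) : ℝ :=
  Real.sqrt (pVar p h (pMean p h))

/-- The normalized perturbation `h_α = (f + α g) / ‖f + α g‖₂`. -/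
noncomputable def normPert (f g : ℝ → ℂ) (α : ℝ) : ℝ → ℂ :=
  fun t => (f t + (α : ℂ) * g t) /
    ((eLpNorm (fun s => f s + (α : ℂ) * g s) 2 volume).toReal : ℂ)

/-!
Chebyshev's inequality for the weight `|t - a| ^ p`: if `pVar p w a ≤ c * R ^ p` and `‖w‖₂ = 1`,
then `w` has mass at least `1 - c` in the ball of radius `R` about `a`. With `R ^ p = 4 Δ_p(f)²`,
`f` has mass `≥ 3/4` near `μ_p(f)` and `h_α` has mass `≥ 1/2` near `μ_p(h_α)`. The triangle
inequality in `L²` of the first ball, together with `‖f + α g‖₂ ≤ 1 + |α|`, gives `h_α` mass at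
least `((√3/2 - |α|) / (1 + |α|))² > 1/2` there, so the two balls meet and the centres are less
than `2R` apart. No property of `μ_p` is needed beyond its role as the centre in `Δ_p`.
-/

open Metric

section L2

variable {X : Type*} [MeasurableSpace X] {μ : Measure X}

lemma integral_norm_sq_eq_sq_toReal_eLpNorm {E : Type*} [NormedAddCommGroup E] {w : X → E}
    (hw : MemLp w 2 μ) : ∫ x, ‖w x‖ ^ 2 ∂μ = (eLpNorm w 2 μ).toReal ^ 2 := by
  have h := hw.eLpNorm_eq_integral_rpow_norm two_ne_zero ENNReal.ofNat_ne_top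
  have hnn : 0 ≤ ∫ x, ‖w x‖ ^ 2 ∂μ := integral_nonneg fun x => by positivity
  simp only [ENNReal.toReal_ofNat, Real.rpow_two] at h
  rw [h, ENNReal.toReal_ofReal (by positivity), ← Real.rpow_natCast, ← Real.rpow_mul hnn]
  norm_num

lemma toReal_eLpNorm_add_mul_le {f g : X → ℂ} (hf : MemLp f 2 μ) (hg : MemLp g 2 μ) (c : ℂ) :
    (eLpNorm (fun x => f x + c * g x) 2 μ).toReal
      ≤ (eLpNorm f 2 μ).toReal + ‖c‖ * (eLpNorm g 2 μ).toReal := by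
  have := norm_add_le (hf.toLp f) (c • hg.toLp g)
  rwa [norm_smul, Lp.norm_toLp, Lp.norm_toLp, ← MemLp.toLp_const_smul, ← MemLp.toLp_add,
    Lp.norm_toLp] at this

lemma toReal_eLpNorm_sub_le_add_mul {f g : X → ℂ} (hf : MemLp f 2 μ) (hg : MemLp g 2 μ) (c : ℂ) :
    (eLpNorm f 2 μ).toReal - ‖c‖ * (eLpNorm g 2 μ).toReal
      ≤ (eLpNorm (fun x => f x + c * g x) 2 μ).toReal := by
  have := norm_sub_norm_le (hf.toLp f) (-(c • hg.toLp g))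
  rwa [norm_neg, norm_smul, sub_neg_eq_add, Lp.norm_toLp, Lp.norm_toLp, ← MemLp.toLp_const_smul,
    ← MemLp.toLp_add, Lp.norm_toLp] at this

lemma MeasureTheory.Integrable.mul_norm_add_sq {E : Type*} [NormedAddCommGroup E] {φ : X → ℝ}
    {f g : X → E} (hφ : AEStronglyMeasurable φ μ) (hφ0 : ∀ x, 0 ≤ φ x)
    (hf : AEStronglyMeasurable f μ) (hg : AEStronglyMeasurable g μ)
    (hfi : Integrable (fun x => φ x * ‖f x‖ ^ 2) μ)
    (hgi : Integrable (fun x => φ x * ‖g x‖ ^ 2) μ) :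
    Integrable (fun x => φ x * ‖f x + g x‖ ^ 2) μ := by
  refine ((hfi.add hgi).const_mul 2).mono' (hφ.mul ((hf.add hg).norm.pow 2))
    (Eventually.of_forall fun x => ?_)
  have hsq : ‖f x + g x‖ ^ 2 ≤ 2 * ‖f x‖ ^ 2 + 2 * ‖g x‖ ^ 2 := by
    nlinarith [norm_add_le (f x) (g x), sq_nonneg (‖f x‖ - ‖g x‖), norm_nonneg (f x + g x)]
  rw [Real.norm_eq_abs, abs_of_nonneg (by have := hφ0 x; positivity), Pi.add_apply]
  nlinarith [mul_le_mul_of_nonneg_left hsq (hφ0 x)]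

end L2

lemma abs_sub_rpow_le {p : ℝ} (hp : 0 ≤ p) (t a : ℝ) :
    |t - a| ^ p ≤ 2 ^ p * (|t| ^ p + |a| ^ p) := by
  have hmax : |t - a| ≤ 2 * max |t| |a| := by
    have := abs_sub t a
    have := le_max_left |t| |a|
    have := le_max_right |t| |a|
    linarith
  calc |t - a| ^ p ≤ (2 * max |t| |a|) ^ p := by gcongr
    _ = 2 ^ p * max (|t| ^ p) (|a| ^ p) := by
      rw [Real.mul_rpow zero_le_two (by positivity), Real.rpow_max (abs_nonneg t) (abs_nonneg a) hp]
    _ ≤ 2 ^ p * (|t| ^ p + |a| ^ p) := by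
      gcongr
      exact max_le_add_of_nonneg (by positivity) (by positivity)

lemma MeasureTheory.Integrable.abs_sub_rpow_mul {μ : Measure ℝ} {p : ℝ} (hp : 0 ≤ p) {φ : ℝ → ℝ}
    (hφ : Integrable φ μ) (h0 : Integrable (fun t => |t| ^ p * φ t) μ) (a : ℝ) :
    Integrable (fun t => |t - a| ^ p * φ t) μ := by
  refine ((h0.norm.add (hφ.norm.const_mul (|a| ^ p))).const_mul (2 ^ p)).mono'
    ((by fun_prop : Measurable fun t : ℝ => |t - a| ^ p).aestronglyMeasurable.mul hφ.1)
    (Eventually.of_forall fun t => ?_)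
  rw [Pi.add_apply, norm_mul, norm_mul, Real.norm_of_nonneg (by positivity : 0 ≤ |t - a| ^ p),
    Real.norm_of_nonneg (by positivity : 0 ≤ |t| ^ p)]
  have := mul_le_mul_of_nonneg_right (abs_sub_rpow_le hp t a) (norm_nonneg (φ t))
  linarith

lemma pVar_nonneg (p : ℝ) (w : ℝ → ℂ) (a : ℝ) : 0 ≤ pVar p w a :=
  integral_nonneg fun _ => by positivity

lemma pDisp_sq (p : ℝ) (w : ℝ → ℂ) : pDisp p w ^ 2 = pVar p w (pMean p w) :=
  Real.sq_sqrt (pVar_nonneg p w _)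

lemma pVar_pos {p : ℝ} {w : ℝ → ℂ} {a : ℝ}
    (hw : Integrable (fun t => |t - a| ^ p * ‖w t‖ ^ 2)) (hw0 : ¬ w =ᵐ[volume] 0) :
    0 < pVar p w a := by
  refine (pVar_nonneg p w a).lt_of_ne fun hzero => hw0 ?_
  have hae := (integral_eq_zero_iff_of_nonneg (fun t => by positivity) hw).mp hzero.symm
  have hne : ∀ᵐ t : ℝ, t ≠ a := by simp [ae_iff, measure_singleton]
  filter_upwards [hae, hne] with t ht hta
  have hpos : 0 < |t - a| ^ p := Real.rpow_pos_of_pos (abs_pos.mpr (sub_ne_zero.mpr hta)) p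
  simpa [hpos.ne'] using ht

lemma sub_le_setIntegral_ball_of_pVar_le {p : ℝ} (hp : 0 ≤ p) {w : ℝ → ℂ} {a R c : ℝ}
    (hR : 0 < R) (hw2 : Integrable (fun t => ‖w t‖ ^ 2))
    (hw : Integrable (fun t => |t - a| ^ p * ‖w t‖ ^ 2)) (hvar : pVar p w a ≤ c * R ^ p) :
    (∫ t, ‖w t‖ ^ 2) - c ≤ ∫ t in ball a R, ‖w t‖ ^ 2 := by
  have tail : (∫ t in (ball a R)ᶜ, ‖w t‖ ^ 2) * R ^ p ≤ c * R ^ p := by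
    rw [← integral_mul_const]
    refine (setIntegral_mono_on (hw2.mul_const _).integrableOn hw.integrableOn
      measurableSet_ball.compl fun t ht => ?_).trans
        ((setIntegral_le_integral hw (Eventually.of_forall fun t => by positivity)).trans hvar)
    rw [mul_comm]
    gcongr
    simpa [Real.dist_eq] using ht
  rw [← integral_add_compl (measurableSet_ball (x := a) (ε := R)) hw2]
  linarith [le_of_mul_le_mul_right tail (Real.rpow_pos_of_pos hR p)]

lemma dist_lt_of_integral_lt_setIntegral_ball_add {w : ℝ → ℂ}
    (hw2 : Integrable (fun t => ‖w t‖ ^ 2)) {a b r s : ℝ}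
    (h : ∫ t, ‖w t‖ ^ 2 < (∫ t in ball a r, ‖w t‖ ^ 2) + ∫ t in ball b s, ‖w t‖ ^ 2) :
    dist a b < r + s := by
  by_contra! hab
  rw [← setIntegral_union (ball_disjoint_ball hab) measurableSet_ball hw2.integrableOn
    hw2.integrableOn] at h
  exact h.not_ge (setIntegral_le_integral hw2 (Eventually.of_forall fun t => by positivity))

lemma half_lt_sq_div_sq {a B N : ℝ} (ha0 : 0 ≤ a) (ha : a < √38 / 2 - 3)
    (hB : √(3 / 4) - a ≤ B) (hBN : B ≤ N) (hN : N ≤ 1 + a) : 1 / 2 < B ^ 2 / N ^ 2 := by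
  have h38 : √38 ≤ 6.165 := Real.sqrt_le_iff.mpr ⟨by norm_num, by norm_num⟩
  have h34 : 0.86 ≤ √(3 / 4) := Real.le_sqrt_of_sq_le (by norm_num)
  have hB0 : 0 < B := by linarith
  rw [lt_div_iff₀ (by nlinarith)]
  nlinarith [mul_le_mul hBN hBN hB0.le (hB0.le.trans hBN), mul_le_mul hB hB (by linarith) hB0.le]

section NormPert

variable {f g : ℝ → ℂ} {α : ℝ}

lemma norm_normPert_sq (f g : ℝ → ℂ) (α t : ℝ) :
    ‖normPert f g α t‖ ^ 2 = ‖f t + α * g t‖ ^ 2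
      / (eLpNorm (fun s => f s + α * g s) 2 volume).toReal ^ 2 := by
  simp [normPert, div_pow]

lemma setIntegral_norm_normPert_sq (hu : MemLp (fun t => f t + α * g t) 2 volume) (s : Set ℝ) :
    ∫ t in s, ‖normPert f g α t‖ ^ 2
      = (eLpNorm (fun t => f t + α * g t) 2 (volume.restrict s)).toReal ^ 2
        / (eLpNorm (fun t => f t + α * g t) 2 volume).toReal ^ 2 := by
  simp_rw [norm_normPert_sq]
  rw [integral_div, integral_norm_sq_eq_sq_toReal_eLpNorm (hu.restrict s)]

lemma integrable_norm_normPert_sq (hu : MemLp (fun t => f t + α * g t) 2 volume) :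
    Integrable (fun t => ‖normPert f g α t‖ ^ 2) := by
  simpa only [norm_normPert_sq] using (hu.integrable_norm_pow two_ne_zero).div_const _

lemma integral_norm_normPert_sq (hf : MemLp f 2 volume) (hg : MemLp g 2 volume)
    (hfn : eLpNorm f 2 volume = 1) (hgn : eLpNorm g 2 volume = 1) (hα : |α| < 1) :
    ∫ t, ‖normPert f g α t‖ ^ 2 = 1 := by
  have hN := toReal_eLpNorm_sub_le_add_mul hf hg α
  rw [hfn, hgn, ENNReal.toReal_one, Complex.norm_real, Real.norm_eq_abs] at hN
  rw [← setIntegral_univ, setIntegral_norm_normPert_sq (hf.add (hg.const_mul _)),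
    Measure.restrict_univ, div_self (pow_pos (by linarith) 2).ne']

lemma integrable_rpow_mul_norm_normPert_sq {p : ℝ} (hf : AEStronglyMeasurable f volume)
    (hg : AEStronglyMeasurable g volume) (hff : Integrable (fun t : ℝ => |t| ^ p * ‖f t‖ ^ 2))
    (hgf : Integrable (fun t : ℝ => |t| ^ p * ‖g t‖ ^ 2)) :
    Integrable (fun t : ℝ => |t| ^ p * ‖normPert f g α t‖ ^ 2) := by
  have hαg : Integrable (fun t : ℝ => |t| ^ p * ‖(α : ℂ) * g t‖ ^ 2) := by
    simpa [norm_mul, mul_pow, mul_left_comm] using hgf.const_mul (α ^ 2)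
  have := (Integrable.mul_norm_add_sq
    (by fun_prop : Measurable fun t : ℝ => |t| ^ p).aestronglyMeasurable (fun t => by positivity) hf
    (hg.const_mul _) hff hαg).div_const ((eLpNorm (fun t => f t + α * g t) 2 volume).toReal ^ 2)
  simpa only [norm_normPert_sq, mul_div_assoc] using this

lemma half_lt_setIntegral_norm_normPert_sq (hf : MemLp f 2 volume) (hg : MemLp g 2 volume)
    (hfn : eLpNorm f 2 volume = 1) (hgn : eLpNorm g 2 volume = 1)
    (hα : |α| < √38 / 2 - 3) {s : Set ℝ} (hs : 3 / 4 ≤ ∫ t in s, ‖f t‖ ^ 2) :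
    1 / 2 < ∫ t in s, ‖normPert f g α t‖ ^ 2 := by
  have hu := hf.add (hg.const_mul α)
  have hgs : (eLpNorm g 2 (volume.restrict s)).toReal ≤ 1 := by
    have := ENNReal.toReal_mono hg.eLpNorm_ne_top
      (eLpNorm_mono_measure g (Measure.restrict_le_self (s := s)))
    rwa [hgn, ENNReal.toReal_one] at this
  have hfs : √(3 / 4) ≤ (eLpNorm f 2 (volume.restrict s)).toReal := by
    rw [Real.sqrt_le_left ENNReal.toReal_nonneg, ← integral_norm_sq_eq_sq_toReal_eLpNorm
      (hf.restrict s)]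
    exact hs
  have hus := toReal_eLpNorm_sub_le_add_mul (hf.restrict s) (hg.restrict s) α
  have hu1 := toReal_eLpNorm_add_mul_le hf hg α
  rw [Complex.norm_real, Real.norm_eq_abs] at hus hu1
  rw [hfn, hgn, ENNReal.toReal_one] at hu1
  rw [setIntegral_norm_normPert_sq hu]
  refine half_lt_sq_div_sq (abs_nonneg α) hα ?_ ?_ (by linarith)
  · nlinarith [abs_nonneg α]
  · exact ENNReal.toReal_mono hu.eLpNorm_ne_top (eLpNorm_mono_measure _ Measure.restrict_le_self)

end NormPert

/-- Let `p > 1` and `f, g ∈ L²(ℝ)` with `‖f‖₂ = ‖g‖₂ = 1` and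
`Δ_p(f), Δ_p(g) < ∞`.  For `|α| < 1` set `h_α = (f + αg)/‖f + αg‖₂`.
If `|α| < √38/2 - 3` and `Δ_p(h_α)² ≤ 2 Δ_p(f)²`, then
`|μ_p(h_α) - μ_p(f)| ≤ 2 (4 Δ_p(f)²)^{1/p}`. -/
theorem statement4 (p : ℝ) (hp : 1 < p) (f g : ℝ → ℂ)
    (hfL2 : MemLp f 2 (volume : Measure ℝ)) (hgL2 : MemLp g 2 (volume : Measure ℝ))
    (hfnorm : eLpNorm f 2 volume = 1) (hgnorm : eLpNorm g 2 volume = 1)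
    (hffin : Integrable (fun t : ℝ => |t| ^ p * ‖f t‖ ^ 2) volume)
    (hgfin : Integrable (fun t : ℝ => |t| ^ p * ‖g t‖ ^ 2) volume)
    (α : ℝ) (hα1 : |α| < 1) (hα2 : |α| < Real.sqrt 38 / 2 - 3)
    (hdisp : pDisp p (normPert f g α) ^ 2 ≤ 2 * pDisp p f ^ 2) :
    |pMean p (normPert f g α) - pMean p f| ≤ 2 * (4 * pDisp p f ^ 2) ^ (1 / p) := by
  set h := normPert f g α
  have hp0 : 0 ≤ p := by linarith
  have hf2 := hfL2.integrable_norm_pow two_ne_zero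
  have hh2 : Integrable (fun t => ‖h t‖ ^ 2) :=
    integrable_norm_normPert_sq (hfL2.add (hgL2.const_mul _))
  have hf1 : ∫ t, ‖f t‖ ^ 2 = 1 := by
    rw [integral_norm_sq_eq_sq_toReal_eLpNorm hfL2, hfnorm, ENNReal.toReal_one, one_pow]
  have hh1 : ∫ t, ‖h t‖ ^ 2 = 1 := integral_norm_normPert_sq hfL2 hgL2 hfnorm hgnorm hα1
  have hfa := hf2.abs_sub_rpow_mul hp0 hffin
  have hha := hh2.abs_sub_rpow_mul hp0
    (integrable_rpow_mul_norm_normPert_sq hfL2.1 hgL2.1 hffin hgfin)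
  rw [pDisp_sq, pDisp_sq] at hdisp
  rw [pDisp_sq]
  set Δ := pVar p f (pMean p f)
  have hΔ : 0 < Δ := pVar_pos (hfa _) fun hf0 => by simp [eLpNorm_congr_ae hf0] at hfnorm
  have hRp : ((4 * Δ) ^ (1 / p)) ^ p = 4 * Δ := by
    rw [one_div, Real.rpow_inv_rpow (by positivity) (by positivity)]
  set R := (4 * Δ) ^ (1 / p)
  have hR : 0 < R := by positivity
  have mass_f := sub_le_setIntegral_ball_of_pVar_le hp0 hR hf2 (hfa (pMean p f))
    (c := 1 / 4) (by linarith)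
  have mass_h := sub_le_setIntegral_ball_of_pVar_le hp0 hR hh2 (hha (pMean p h))
    (c := 1 / 2) (by linarith)
  have near_f : 1 / 2 < ∫ t in ball (pMean p f) R, ‖h t‖ ^ 2 :=
    half_lt_setIntegral_norm_normPert_sq hfL2 hgL2 hfnorm hgnorm hα2 (by linarith)
  have hdist := dist_lt_of_integral_lt_setIntegral_ball_add hh2 (a := pMean p f) (b := pMean p h)
    (r := R) (s := R) (by linarith)
  rw [Real.dist_eq, abs_sub_comm] at hdist
  linarith
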